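/- Let A, B, C be subspaces of E, let 𝒪 be an E-orbit in X²_{AB} and 𝒪' an E-orbit in X²_{BC} with p₂𝒪 = p₁𝒪'. Then 𝒪 • 𝒪' is exactly one orbit for the action of E × B on X²_{AC} given by (e,b)·(x,y) = (e+b+x, e+y). -/
import Mathlib


open scoped Classical

set_option linter.unusedSectionVars false

noncomputable section

namespace Lusztig

variable (E X : Type) [AddCommGroup E] [Module (ZMod 2) E] [Fintype E]
  [Fintype X] [AddAction E X]

/-- The stabilizer of `x` in `E`, as a subset of `E`. -/
def stabSet (x : X) : Set E := {e : E | e +ᵥ x = x}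

/-- `X_A`: the set of points of `X` whose stabilizer in `E` equals `A`. -/
def XA (A : Submodule (ZMod 2) E) : Set X := {x : X | stabSet E X x = (A : Set E)}

/-- `X²_{AB} = X_A × X_B`. -/
def X2 (A B : Submodule (ZMod 2) E) : Set (X × X) := (XA E X A) ×ˢ (XA E X B)

/-- The `E`-orbit of `x` in `X`. -/
def orb (x : X) : Set X := {y : X | ∃ e : E, y = e +ᵥ x}

/-- The `E`-orbit of `(x,y)` for the diagonal action of `E` on `X × X`. -/
def orb2 (x y : X) : Set (X × X) := {q : X × X | ∃ e : E, q = (e +ᵥ x, e +ᵥ y)}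

/-- `O` is an `E`-orbit (for the diagonal action) contained in `X²_{AB}`. -/
def IsOrb2 (A B : Submodule (ZMod 2) E) (O : Set (X × X)) : Prop :=
  ∃ x y : X, x ∈ XA E X A ∧ y ∈ XA E X B ∧ O = orb2 E X x y

/-- The `E × B`-orbit of `(x,y)` for the action `(e,b)·(x,y) = (e+b+x, e+y)`. -/
def orbEB (B : Submodule (ZMod 2) E) (x y : X) : Set (X × X) :=
  {q : X × X | ∃ e b : E, b ∈ B ∧ q = ((e + b) +ᵥ x, e +ᵥ y)}

/-- `M` is an `E × B`-orbit contained in `X²_{AC}` for the action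
`(e,b)·(x,y) = (e+b+x, e+y)`. -/
def IsOrbEB (A B C : Submodule (ZMod 2) E) (M : Set (X × X)) : Prop :=
  ∃ x y : X, x ∈ XA E X A ∧ y ∈ XA E X C ∧ M = orbEB E X B x y

/-- Image under the first projection. -/
def p1 (S : Set (X × X)) : Set X := Prod.fst '' S

/-- Image under the second projection. -/
def p2 (S : Set (X × X)) : Set X := Prod.snd '' S

/-- `U_{ABC} = {(a,b,c) ∈ A × B × C : a + b + c = 0}`. -/
def UABC (A B C : Submodule (ZMod 2) E) : Set (E × E × E) :=
  {t : E × E × E | t.1 ∈ A ∧ t.2.1 ∈ B ∧ t.2.2 ∈ C ∧ t.1 + t.2.1 + t.2.2 = 0}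

/-- `X̄_C`: the set of `E`-orbits contained in `X_C`. -/
def barX (C : Submodule (ZMod 2) E) : Set (Set X) :=
  {s : Set X | ∃ x ∈ XA E X C, s = orb E X x}

/-- The dual (space of linear forms `P → ℤ/2`) of a subspace `P` of `E`. -/
abbrev Dl (P : Submodule (ZMod 2) E) : Type := ↥P →ₗ[ZMod 2] ZMod 2

/-- Restriction of a linear form along an inclusion of subspaces. -/
def res {P Q : Submodule (ZMod 2) E} (h : P ≤ Q) (φ : Dl E Q) : Dl E P :=
  φ.comp (Submodule.inclusion h)

theorem leAB (A B C : Submodule (ZMod 2) E) : A ⊓ B ⊓ C ≤ A ⊓ B := inf_le_left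
theorem leBC (A B C : Submodule (ZMod 2) E) : A ⊓ B ⊓ C ≤ B ⊓ C :=
  le_inf (inf_le_left.trans inf_le_right) inf_le_right
theorem leAC (A B C : Submodule (ZMod 2) E) : A ⊓ B ⊓ C ≤ A ⊓ C :=
  le_inf (inf_le_left.trans inf_le_left) inf_le_right
theorem leBA (A B : Submodule (ZMod 2) E) : A ⊓ B ≤ B ⊓ A := le_inf inf_le_right inf_le_left

/-- The convolution product `𝓕_{AB} × 𝓕_{BC} → 𝓕_{AC}`. -/
def conv (A B C : Submodule (ZMod 2) E)
    (f₁ : (X × X) × Dl E (A ⊓ B) → ℂ) (f₂ : (X × X) × Dl E (B ⊓ C) → ℂ) :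
    (X × X) × Dl E (A ⊓ C) → ℂ :=
  fun p =>
    (∑ᶠ (y : X) (_ : y ∈ XA E X B) (ε₁ : Dl E (A ⊓ B)) (ε₂ : Dl E (B ⊓ C))
        (_ : res E (leAB E A B C) ε₁ + res E (leBC E A B C) ε₂
              + res E (leAC E A B C) p.2 = 0),
        f₁ ((p.1.1, y), ε₁) * f₂ ((y, p.1.2), ε₂)) *
      (Nat.card ↥(A ⊓ B ⊓ C) : ℂ) / (Nat.card ↥(A ⊓ C) : ℂ)

/-- The defining conditions for membership in `𝓕_{AB}`: supported on `X²_{AB}` and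
invariant under the diagonal `E`-action. -/
def MemF (A B : Submodule (ZMod 2) E) (f : (X × X) × Dl E (A ⊓ B) → ℂ) : Prop :=
  (∀ p : (X × X) × Dl E (A ⊓ B), p.1 ∉ X2 E X A B → f p = 0) ∧
  (∀ (e : E) (x y : X) (ε : Dl E (A ⊓ B)), f ((e +ᵥ x, e +ᵥ y), ε) = f ((x, y), ε))

/-- `𝓕_{AB}` as a subspace of the space of all functions. -/
def FAB (A B : Submodule (ZMod 2) E) : Submodule ℂ ((X × X) × Dl E (A ⊓ B) → ℂ) where
  carrier := {f | MemF E X A B f}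
  add_mem' := by
    intro a b ha hb
    exact ⟨fun p hp => by simp [ha.1 p hp, hb.1 p hp],
      fun e x y ε => by simp [Pi.add_apply, ha.2 e x y ε, hb.2 e x y ε]⟩
  zero_mem' := ⟨fun p hp => rfl, fun e x y ε => rfl⟩
  smul_mem' := by
    intro c a ha
    exact ⟨fun p hp => by simp [Pi.smul_apply, ha.1 p hp],
      fun e x y ε => by simp [Pi.smul_apply, ha.2 e x y ε]⟩

/-- `[Ξ]^ε`. -/
def br (A B : Submodule (ZMod 2) E) (Ξ : Set (X × X)) (ε : Dl E (A ⊓ B)) :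
    (X × X) × Dl E (A ⊓ B) → ℂ :=
  fun p => if p.1 ∈ Ξ ∧ p.2 = ε then 1 else 0

/-- The ambient space of `𝓕 = ⊕_{A,B} 𝓕_{AB}` (all summands at once). -/
abbrev FF : Type := ∀ A B : Submodule (ZMod 2) E, (X × X) × Dl E (A ⊓ B) → ℂ

/-- The embedding of the `(A,B)` summand into `𝓕`. -/
def emb (A B : Submodule (ZMod 2) E) (f : (X × X) × Dl E (A ⊓ B) → ℂ) : FF E X :=
  fun A' B' p =>
    if h : A = A' ∧ B = B' then f (p.1, cast (by rw [h.1, h.2]) p.2) else 0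

/-- `𝓕` as a subspace of `FF`: componentwise supported on `X²_{AB}` and `E`-invariant. -/
def FFsub : Submodule ℂ (FF E X) where
  carrier := {g | ∀ A B, MemF E X A B (g A B)}
  add_mem' := by
    intro a b ha hb A B
    exact ⟨fun p hp => by simp [(ha A B).1 p hp, (hb A B).1 p hp],
      fun e x y ε => by simp [(ha A B).2 e x y ε, (hb A B).2 e x y ε]⟩
  zero_mem' := fun A B => ⟨fun p hp => rfl, fun e x y ε => rfl⟩
  smul_mem' := by
    intro c a ha A B
    exact ⟨fun p hp => by simp [(ha A B).1 p hp],
      fun e x y ε => by simp [(ha A B).2 e x y ε]⟩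

/-- The product on `𝓕` (zero between summands `𝓕_{AB}`, `𝓕_{B'C}` with `B ≠ B'`). -/
def mulFF (g h : FF E X) : FF E X :=
  fun A C => ∑ᶠ B : Submodule (ZMod 2) E, conv E X A B C (g A B) (h B C)

/-- The diagonal `Δ_A ⊆ X²_{AA}`. -/
def diagSet (A : Submodule (ZMod 2) E) : Set (X × X) :=
  {q : X × X | q.1 ∈ XA E X A ∧ q.2 = q.1}

/-- The element `∑_A [Δ_A]^0` of `𝓕`. -/
def unitFF : FF E X :=
  ∑ᶠ A : Submodule (ZMod 2) E, emb E X A A (br E X A A (diagSet E X A) 0)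

/-- The map `f ↦ f^#` on `𝓕`. -/
def shFF (g : FF E X) : FF E X :=
  fun A B p => g B A ((p.1.2, p.1.1), res E (leBA E B A) p.2)

/-- `𝒪 • 𝒪'`. -/
def bullet (O O' : Set (X × X)) : Set (X × X) :=
  {q : X × X | ∃ y : X, (q.1, y) ∈ O ∧ (y, q.2) ∈ O'}

/-- `∑_{ε ∈ α̃} [𝓜]^ε ∈ 𝓕_{AC}`, where `α̃` is the fibre of
`(A∩C)* → (A∩B∩C)*` over `α`. -/
def bSum (A B C : Submodule (ZMod 2) E) (M : Set (X × X)) (α : Dl E (A ⊓ B ⊓ C)) :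
    (X × X) × Dl E (A ⊓ C) → ℂ :=
  ∑ᶠ (ε : Dl E (A ⊓ C)) (_ : res E (leAC E A B C) ε = α), br E X A C M ε

/-- The set `𝓑_{oBC} ⊆ 𝓕` (embedded in `FF`). -/
def BoBC (A B C : Submodule (ZMod 2) E) (o : Set X) : Set (FF E X) :=
  {g | ∃ (M : Set (X × X)) (α : Dl E (A ⊓ B ⊓ C)),
      IsOrbEB E X A B C M ∧ p1 X M = o ∧ g = emb E X A C (bSum E X A B C M α)}

/-- The set `𝓑_{oB} = ⊔_C 𝓑_{oBC}`. -/
def BoB (A B : Submodule (ZMod 2) E) (o : Set X) : Set (FF E X) :=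
  ⋃ C : Submodule (ZMod 2) E, BoBC E X A B C o

/-- `[[oB]]`, the `ℂ`-span of `𝓑_{oB}`. -/
def ooB (A B : Submodule (ZMod 2) E) (o : Set X) : Submodule ℂ (FF E X) :=
  Submodule.span ℂ (BoB E X A B o)

lemma add_self_zero (e : E) : e + e = 0 := by
  have h2 : (2 : ZMod 2) • e = e + e := two_smul _ e
  have : (2 : ZMod 2) = 0 := rfl
  rw [this, zero_smul] at h2
  exact h2.symm

lemma stab_vadd (e : E) (x : X) : stabSet E X (e +ᵥ x) = stabSet E X x := by
  ext g
  simp only [stabSet, Set.mem_setOf_eq, vadd_vadd]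
  constructor
  · intro hg
    have h1 : g +ᵥ x = e +ᵥ ((g + e) +ᵥ x) := by
      rw [vadd_vadd]
      congr 1
      rw [add_comm g e, ← add_assoc, add_self_zero E e, zero_add]
    rw [h1, hg, vadd_vadd, add_self_zero E e, zero_vadd]
  · intro hg
    rw [add_comm g e, ← vadd_vadd, hg]

/-- `𝒪 • 𝒪'` is exactly one `E × B`-orbit on `X²_{AC}` for the action
`(e,b)·(x,y) = (e+b+x, e+y)`. -/
theorem statement9 (A B C : Submodule (ZMod 2) E) (O O' : Set (X × X))
    (hO : IsOrb2 E X A B O) (hO' : IsOrb2 E X B C O')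
    (h : p2 X O = p1 X O') :
    IsOrbEB E X A B C (bullet X O O') := by
  obtain ⟨x, y, hx, hy, rfl⟩ := hO
  obtain ⟨y', z, hy', hz, rfl⟩ := hO'
  -- y' is in p1 O' = p2 O, so y' = e +ᵥ y for some e
  have hmem : y' ∈ p1 X (orb2 E X y' z) := ⟨(y', z), ⟨0, by simp⟩, rfl⟩
  rw [← h] at hmem
  obtain ⟨⟨u, v⟩, ⟨e, he⟩, hsnd⟩ := hmem
  simp only [Prod.mk.injEq] at he
  have hy'e : y' = e +ᵥ y := by rw [← hsnd, he.2]
  refine ⟨x, e +ᵥ z, hx, ?_, ?_⟩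
  · show stabSet E X (e +ᵥ z) = (C : Set E)
    rw [stab_vadd]; exact hz
  · ext ⟨u, w⟩
    constructor
    · rintro ⟨m, ⟨e₁, he₁⟩, ⟨e₂, he₂⟩⟩
      simp only [Prod.mk.injEq] at he₁ he₂
      refine ⟨e₂ + e, e₁ + e₂ + e, ?_, ?_⟩
      · -- b := e₁ + e₂ + e ∈ B since b +ᵥ y = y
        have hmemB : (e₁ + e₂ + e) ∈ stabSet E X y := by
          show (e₁ + e₂ + e) +ᵥ y = y
          have hm : e₁ +ᵥ y = (e₂ + e) +ᵥ y := by
            rw [← vadd_vadd, ← hy'e, ← he₂.1, he₁.2]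
          calc (e₁ + e₂ + e) +ᵥ y = e₁ +ᵥ ((e₂ + e) +ᵥ y) := by
                rw [vadd_vadd, add_assoc]
            _ = e₁ +ᵥ (e₁ +ᵥ y) := by rw [← hm]
            _ = y := by rw [vadd_vadd, add_self_zero E e₁, zero_vadd]
        rw [hy] at hmemB
        exact hmemB
      · simp only [Prod.mk.injEq]
        constructor
        · rw [he₁.1]
          congr 1
          -- e₂ + e + (e₁ + e₂ + e) = e₁
          have : e₂ + e + (e₁ + e₂ + e) = e₁ + (e₂ + e₂) + (e + e) := by abel
          rw [this, add_self_zero E e₂, add_self_zero E e, add_zero, add_zero]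
        · rw [he₂.2, vadd_vadd]
          congr 1
          rw [add_assoc, add_self_zero E e, add_zero]
    · rintro ⟨e', b, hb, hq⟩
      simp only [Prod.mk.injEq] at hq
      refine ⟨(e' + b) +ᵥ y, ⟨e' + b, by rw [hq.1]⟩, ⟨e' + e, ?_⟩⟩
      have hbstab : b ∈ stabSet E X y := by rw [hy]; exact hb
      have hby : b +ᵥ y = y := hbstab
      simp only [Prod.mk.injEq]
      constructor
      · rw [hy'e, vadd_vadd, ← vadd_vadd, hby, add_assoc, add_self_zero E e,
          add_zero]
      · rw [hq.2, vadd_vadd]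

end Lusztig
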